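/- arXiv:1208.3590 — 3 statements merged into one kernel-verified Lean document; each statement's English description precedes it below -/
import Mathlib

section
/- Let ω be a skew-symmetric bilinear form of rank ≥ 4 on a finite-dimensional real vector space V. Then the linear map from V* to Λ³V* given by γ ↦ ω ∧ γ is injective. -/
/-!
If `ω ∧ γ = 0` and `γ w ≠ 0`, evaluating `ω ∧ γ` at `(u, v, w)` and solving for `ω u v` gives
`ω u = (γ w)⁻¹ • (γ u • ω w + ω u w • γ)`. Hence the range of `ω : V → V*` lies in the span of
`ω w` and `γ`, so `ω` has rank at most `2`.
-/

open Module Submodule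

namespace LinearMap.IsAlt

variable {K V : Type*} [Field K] [AddCommGroup V] [Module K V]
  {ω : V →ₗ[K] V →ₗ[K] K} {γ : V →ₗ[K] K}

theorem eq_smul_of_wedge_eq_zero (hω : ω.IsAlt)
    (hwedge : ∀ u v w, ω u v * γ w - ω u w * γ v + ω v w * γ u = 0)
    {w : V} (hw : γ w ≠ 0) (u : V) :
    ω u = (γ w)⁻¹ • (γ u • ω w + ω u w • γ) := by
  ext v
  have h := hwedge u v w
  rw [← hω.neg w v] at h
  simp only [smul_apply, add_apply, smul_eq_mul]
  field_simp
  linear_combination h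

theorem finrank_range_le_two_of_wedge_eq_zero (hω : ω.IsAlt) (hγ : γ ≠ 0)
    (hwedge : ∀ u v w, ω u v * γ w - ω u w * γ v + ω v w * γ u = 0) :
    finrank K (range ω) ≤ 2 := by
  obtain ⟨w, hw⟩ : ∃ w, γ w ≠ 0 := not_forall.mp fun h ↦ hγ (ext h)
  have hsub : range ω ≤ span K {ω w, γ} := by
    rintro _ ⟨u, rfl⟩
    rw [hω.eq_smul_of_wedge_eq_zero hwedge hw u]
    exact smul_mem _ _ <| add_mem (smul_mem _ _ (subset_span (by simp)))
      (smul_mem _ _ (subset_span (by simp)))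
  have := Module.Finite.span_of_finite K (Set.toFinite {ω w, γ})
  classical
  calc finrank K (range ω) ≤ finrank K (span K {ω w, γ}) := finrank_mono hsub
    _ ≤ 2 := (finrank_span_le_card _).trans (by simpa using Finset.card_le_two)

end LinearMap.IsAlt

theorem stmt_2_general (V : Type*) [AddCommGroup V] [Module ℝ V]
    (ω : V →ₗ[ℝ] V →ₗ[ℝ] ℝ)
    (halt : ∀ v, ω v v = 0)
    (hrank : 4 ≤ Module.finrank ℝ (LinearMap.range ω)) :
    ∀ γ : V →ₗ[ℝ] ℝ,
      (∀ u v w : V, ω u v * γ w - ω u w * γ v + ω v w * γ u = 0) → γ = 0 := by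
  intro γ hwedge
  by_contra hγ
  have := LinearMap.IsAlt.finrank_range_le_two_of_wedge_eq_zero halt hγ hwedge
  omega

/-- Let `ω` be a skew-symmetric bilinear form of rank ≥ 4 on a
finite-dimensional real vector space `V` (rank = rank of the associated musical map
`V → V*`).  Then the linear map `V* → Λ³V*`, `γ ↦ ω ∧ γ`, where
`(ω ∧ γ)(u,v,w) = ω(u,v)γ(w) - ω(u,w)γ(v) + ω(v,w)γ(u)`, is injective. -/
theorem stmt_2 (V : Type*) [AddCommGroup V] [Module ℝ V] [FiniteDimensional ℝ V]
    (ω : V →ₗ[ℝ] V →ₗ[ℝ] ℝ)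
    (halt : ∀ v, ω v v = 0)
    (hrank : 4 ≤ Module.finrank ℝ (LinearMap.range ω)) :
    ∀ γ : V →ₗ[ℝ] ℝ,
      (∀ u v w : V, ω u v * γ w - ω u w * γ v + ω v w * γ u = 0) → γ = 0 :=
  stmt_2_general V ω halt hrank
end

section
/- Let (V, ω) be a 2n-dimensional symplectic vector space and C ⊂ V a subspace of dimension n + k. Then C is coisotropic (i.e., C^ω ⊆ C) if and only if the restriction of the (k+1)-fold wedge power ω^{k+1} to C vanishes. -/
/-!
Let `B = ω|_C`, with kernel `ker B = C ∩ C^ω`. Nondegeneracy gives `dim C^ω = n - k`, so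
`C^ω ⊆ C` iff `dim ker B ≥ n - k`, i.e. iff `rank B = dim C - dim ker B ≤ 2k`.

The alternating form `ω^{k+1}|_C` vanishes as soon as one argument lies in `ker B`, so it factors
through `C / ker B`; when `rank B ≤ 2k` that space has dimension `< 2k + 2` and the form is zero.
Conversely, when `rank B ≥ 2k + 1` one splits off `k + 1` hyperbolic pairs `e_i, f_i` with
`B (e_i, f_i) = 1`. Evaluated on them, a term `sign σ · ∏ B (v_{σ(2i)}, v_{σ(2i+1)})` is nonzero
only if `σ` permutes the pairs, possibly swapping inside some of them, and then the sign of `σ`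
and the signs of the factors cancel; so every term is `0` or `1`, and `ω^{k+1}(e_1, f_1, …) > 0`.
-/

open Module

theorem AlternatingMap.eq_zero_of_finrank_quotient_lt {K M N ι : Type*} [Field K]
    [AddCommGroup M] [Module K M] [FiniteDimensional K M] [AddCommGroup N] [Module K N]
    [Fintype ι] (f : M [⋀^ι]→ₗ[K] N) (R : Submodule K M)
    (hf : ∀ v i, v i ∈ R → f v = 0) (h : finrank K (M ⧸ R) < Fintype.card ι) : f = 0 := by
  classical
  ext v
  have hdep : ¬ LinearIndependent K (R.mkQ ∘ v) := fun hli =>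
    h.not_ge (by simpa using hli.fintype_card_le_finrank)
  obtain ⟨g, hg, j, hj⟩ := Fintype.not_linearIndependent_iff.mp hdep
  have hR : ∑ i, g i • v i ∈ R := by
    rw [← Submodule.ker_mkQ R, LinearMap.mem_ker]
    simpa using hg
  suffices g j • f v = 0 from (smul_eq_zero.mp this).resolve_left hj
  calc g j • f v = ∑ i, g i • f (Function.update v j (v i)) := by
        rw [Finset.sum_eq_single j (fun i _ hij => by rw [f.map_update_self v hij.symm, smul_zero])
          (by simp), Function.update_eq_self]
    _ = f (Function.update v j (∑ i, g i • v i)) := by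
        simp only [f.map_update_sum, f.map_update_smul]
    _ = 0 := hf _ j (by simpa using hR)

theorem Equiv.Perm.exists_eq_prodCongr_mul_prodCongrRight {ι κ : Type*} [Finite ι] [Finite κ]
    [Nonempty κ] (τ : Equiv.Perm (ι × κ)) (h : ∀ i t t', (τ (i, t)).1 = (τ (i, t')).1) :
    ∃ (π : Equiv.Perm ι) (s : ι → Equiv.Perm κ),
      τ = π.prodCongr (Equiv.refl κ) * Equiv.prodCongrRight s := by
  let t₀ := Classical.arbitrary κ
  have hs : ∀ i, Function.Bijective fun t => (τ (i, t)).2 := fun i =>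
    Finite.injective_iff_bijective.mp fun t t' htt' =>
      congrArg Prod.snd (τ.injective (Prod.ext (h i t t') htt'))
  have hπ : Function.Bijective fun i => (τ (i, t₀)).1 :=
    Finite.injective_iff_bijective.mp fun i j hij => by
      obtain ⟨t, ht⟩ := (hs j).2 (τ (i, t₀)).2
      have : τ (j, t) = τ (i, t₀) := Prod.ext ((h j t t₀).trans hij.symm) ht
      exact (congrArg Prod.fst (τ.injective this)).symm
  refine ⟨Equiv.ofBijective _ hπ, fun i => Equiv.ofBijective _ (hs i), ?_⟩
  ext ⟨i, t⟩ <;> simp [h i t t₀]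

-- `(i, t) ↦ 2 * i + t`
def finPairEquiv (k : ℕ) : Fin (k + 1) × Fin 2 ≃ Fin (2 * k + 2) :=
  finProdFinEquiv.trans (finCongr (by ring))

namespace LinearMap

section CommRing

variable {K M : Type*} [CommRing K] [AddCommGroup M] [Module K M]

private lemma prod_update_pair {ι : Type*} [Fintype ι] [DecidableEq ι] [DecidableEq (ι × Fin 2)]
    (B : M →ₗ[K] M →ₗ[K] K) (w : ι × Fin 2 → M) (i : ι) (t : Fin 2) (z : M) :
    ∏ j, B (Function.update w (i, t) z (j, 0)) (Function.update w (i, t) z (j, 1)) =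
      B (Function.update w (i, t) z (i, 0)) (Function.update w (i, t) z (i, 1)) *
        ∏ j ∈ {i}ᶜ, B (w (j, 0)) (w (j, 1)) := by
  rw [Fintype.prod_eq_mul_prod_compl i]
  congr 1
  refine Finset.prod_congr rfl fun j hj => ?_
  rw [Function.update_of_ne, Function.update_of_ne] <;> simp_all

def pairProd (B : M →ₗ[K] M →ₗ[K] K) (ι : Type*) [Fintype ι] :
    MultilinearMap K (fun _ : ι × Fin 2 => M) K where
  toFun w := ∏ i, B (w (i, 0)) (w (i, 1))
  map_update_add' w p x y := by
    classical
    obtain ⟨i, t⟩ := p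
    rw [prod_update_pair, prod_update_pair, prod_update_pair, ← add_mul]
    fin_cases t <;> simp
  map_update_smul' w p c x := by
    classical
    obtain ⟨i, t⟩ := p
    rw [prod_update_pair, prod_update_pair, smul_eq_mul, ← mul_assoc]
    fin_cases t <;> simp

noncomputable def wedgePow (B : M →ₗ[K] M →ₗ[K] K) (ι : Type*) [Fintype ι] [DecidableEq ι] :
    M [⋀^ι × Fin 2]→ₗ[K] K :=
  (pairProd B ι).alternatization

def IsHyperbolicFamily {ι : Type*} (B : M →ₗ[K] M →ₗ[K] K) (w : ι × Fin 2 → M) : Prop :=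
  (∀ i, B (w (i, 0)) (w (i, 1)) = 1) ∧ ∀ p q, p.1 ≠ q.1 → B (w p) (w q) = 0

variable {ι : Type*} (B : M →ₗ[K] M →ₗ[K] K)

section Fintype

variable [Fintype ι] [DecidableEq ι]

theorem wedgePow_apply (w : ι × Fin 2 → M) :
    wedgePow B ι w = ∑ τ : Equiv.Perm (ι × Fin 2),
      (Equiv.Perm.sign τ : K) * ∏ i, B (w (τ (i, 0))) (w (τ (i, 1))) := by
  simp only [wedgePow, MultilinearMap.alternatization_apply, Units.smul_def, zsmul_eq_mul]
  rfl

theorem wedgePow_compl₁₂ {N : Type*} [AddCommGroup N] [Module K N] (f : N →ₗ[K] M)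
    (w : ι × Fin 2 → N) : wedgePow (B.compl₁₂ f f) ι w = wedgePow B ι (f ∘ w) := by
  simp only [wedgePow_apply, compl₁₂_apply, Function.comp_apply]

theorem sum_perm_fin_eq_wedgePow (k : ℕ) (v : Fin (2 * k + 2) → M) :
    ∑ σ : Equiv.Perm (Fin (2 * k + 2)), ((Equiv.Perm.sign σ : ℤ) : K) *
        ∏ i : Fin (k + 1), B (v (σ ⟨2 * i.1, by omega⟩)) (v (σ ⟨2 * i.1 + 1, by omega⟩)) =
      wedgePow B (Fin (k + 1)) (v ∘ finPairEquiv k) := by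
  have h0 : ∀ i : Fin (k + 1), (⟨2 * i.1, by omega⟩ : Fin (2 * k + 2)) = finPairEquiv k (i, 0) :=
    fun i => Fin.ext (by simp [finPairEquiv, finProdFinEquiv])
  have h1 : ∀ i : Fin (k + 1), (⟨2 * i.1 + 1, by omega⟩ : Fin (2 * k + 2)) =
      finPairEquiv k (i, 1) := fun i => Fin.ext (by simp [finPairEquiv, finProdFinEquiv, add_comm])
  rw [wedgePow_apply, ← (finPairEquiv k).permCongr.sum_comp]
  refine Finset.sum_congr rfl fun τ _ => ?_
  simp only [Equiv.Perm.sign_permCongr, h0, h1, Equiv.permCongr_apply, Equiv.symm_apply_apply,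
    Function.comp_apply]

theorem forall_sum_perm_fin_eq_zero_iff (C : Submodule K M) (k : ℕ) :
    (∀ v : Fin (2 * k + 2) → M, (∀ i, v i ∈ C) →
      ∑ σ : Equiv.Perm (Fin (2 * k + 2)), ((Equiv.Perm.sign σ : ℤ) : K) *
        ∏ i : Fin (k + 1), B (v (σ ⟨2 * i.1, by omega⟩)) (v (σ ⟨2 * i.1 + 1, by omega⟩)) = 0) ↔
      wedgePow (B.compl₁₂ C.subtype C.subtype) (Fin (k + 1)) = 0 := by
  simp only [sum_perm_fin_eq_wedgePow]
  constructor
  · intro h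
    ext w
    simpa [wedgePow_compl₁₂, Function.comp_def] using
      h (fun x => w ((finPairEquiv k).symm x)) fun _ => Subtype.prop _
  · intro h v hv
    have : v ∘ finPairEquiv k = C.subtype ∘ fun p => ⟨v (finPairEquiv k p), hv _⟩ := rfl
    rw [this, ← wedgePow_compl₁₂, h, AlternatingMap.zero_apply]

variable {B}

theorem wedgePow_eq_zero_of_mem_ker (hB : B.IsAlt) {w : ι × Fin 2 → M} {p : ι × Fin 2}
    (hp : w p ∈ ker B) : wedgePow B ι w = 0 := by
  rw [mem_ker] at hp
  rw [wedgePow_apply]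
  refine Finset.sum_eq_zero fun τ _ => mul_eq_zero_of_right _ ?_
  obtain ⟨⟨i, t⟩, rfl⟩ := τ.surjective p
  refine Finset.prod_eq_zero (Finset.mem_univ i) ?_
  match t, hp with
  | 0, hp => rw [hp, zero_apply]
  | 1, hp => rw [← hB.neg, hp, zero_apply, neg_zero]

end Fintype

variable {B} {w : ι × Fin 2 → M}

theorem IsHyperbolicFamily.apply_perm (hB : B.IsAlt) (hw : IsHyperbolicFamily B w) (i : ι)
    (σ : Equiv.Perm (Fin 2)) : B (w (i, σ 0)) (w (i, σ 1)) = Equiv.Perm.sign σ := by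
  obtain rfl | rfl : σ = 1 ∨ σ = Equiv.swap 0 1 := by revert σ; decide
  · simp only [Equiv.Perm.one_apply, hw.1, Equiv.Perm.sign_one, Units.val_one, Int.cast_one]
  · rw [Equiv.swap_apply_left, Equiv.swap_apply_right, ← hB.neg, hw.1,
      Equiv.Perm.sign_swap zero_ne_one]
    simp

end CommRing

section Field

variable {K M : Type*} [Field K] [AddCommGroup M] [Module K M] [FiniteDimensional K M]
  {B : M →ₗ[K] M →ₗ[K] K}

theorem wedgePow_eq_zero_of_finrank_lt {ι : Type*} [Fintype ι] [DecidableEq ι] (hB : B.IsAlt)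
    (h : finrank K M < 2 * Fintype.card ι + finrank K (ker B)) : wedgePow B ι = 0 := by
  refine (wedgePow B ι).eq_zero_of_finrank_quotient_lt (ker B)
    (fun _ _ hp => wedgePow_eq_zero_of_mem_ker hB hp) ?_
  have := (ker B).finrank_quotient_add_finrank
  rw [Fintype.card_prod, Fintype.card_fin]
  omega

theorem finrank_le_finrank_inf_ker_add_two (f g : M →ₗ[K] K) :
    finrank K M ≤ finrank K (ker f ⊓ ker g : Submodule K M) + 2 := by
  have h1 := (f.prod g).finrank_range_add_finrank_ker
  have h2 := (range (f.prod g)).finrank_le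
  rw [Module.finrank_prod, finrank_self, ker_prod] at *
  omega

theorem finrank_ker_compl₁₂_le (hB : B.IsAlt) {a b : M} (hab : B a b = 1) :
    finrank K (ker (B.compl₁₂ (ker (B a) ⊓ ker (B b)).subtype (ker (B a) ⊓ ker (B b)).subtype))
      ≤ finrank K (ker B) := by
  set M' := ker (B a) ⊓ ker (B b)
  rw [← Submodule.finrank_map_subtype_eq M']
  refine Submodule.finrank_mono ?_
  rintro _ ⟨x, hx, rfl⟩
  rw [SetLike.mem_coe, mem_ker] at hx
  obtain ⟨hxa, hxb⟩ : B x a = 0 ∧ B x b = 0 := ⟨hB.eq_iff.mp x.2.1, hB.eq_iff.mp x.2.2⟩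
  have hba : B b a = -1 := by rw [← hB.neg, hab]
  -- the projection of `z` to the `B`-orthogonal of the hyperbolic pair `a, b`
  have hproj : ∀ z, z + B b z • a - B a z • b ∈ M' := fun z => by
    refine ⟨?_, ?_⟩ <;> simp [mem_ker, hB.self_eq_zero, hab, hba]
  rw [mem_ker]
  ext z
  have hz := LinearMap.congr_fun hx ⟨_, hproj z⟩
  simp only [compl₁₂_apply, Submodule.subtype_apply, map_add, map_sub, map_smul, hxa, hxb,
    smul_zero, add_zero, sub_zero, zero_apply] at hz
  simpa using hz

theorem exists_isHyperbolicFamily (hB : B.IsAlt) (m : ℕ)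
    (h : 2 * m + finrank K (ker B) ≤ finrank K M + 1) :
    ∃ w : Fin m × Fin 2 → M, IsHyperbolicFamily B w := by
  induction m generalizing M with
  | zero => exact ⟨Fin.elim0 ∘ Prod.fst, fun i => i.elim0, fun p => p.1.elim0⟩
  | succ m ih =>
    obtain ⟨a, x, hax⟩ : ∃ a x, B a x ≠ 0 := by
      by_contra! hB0
      have : ker B = ⊤ := eq_top_iff.mpr fun a _ => mem_ker.mpr (ext (hB0 a))
      rw [this, finrank_top] at h
      omega
    set b := (B a x)⁻¹ • x
    have hab : B a b = 1 := by simp [b, hax]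
    set M' := ker (B a) ⊓ ker (B b)
    obtain ⟨w', hw'1, hw'0⟩ := ih (B := B.compl₁₂ M'.subtype M'.subtype) (fun y => hB y) (by
      have h1 : finrank K M ≤ finrank K M' + 2 := finrank_le_finrank_inf_ker_add_two _ _
      have h2 : finrank K (ker (B.compl₁₂ M'.subtype M'.subtype)) ≤ finrank K (ker B) :=
        finrank_ker_compl₁₂_le hB hab
      omega)
    have hM'a : ∀ y : M', B a y = 0 ∧ B y a = 0 := fun y => ⟨y.2.1, hB.eq_iff.mp y.2.1⟩
    have hM'b : ∀ y : M', B b y = 0 ∧ B y b = 0 := fun y => ⟨y.2.2, hB.eq_iff.mp y.2.2⟩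
    let W : Fin (m + 1) → Fin 2 → M := Fin.cons ![a, b] fun i t => w' (i, t)
    refine ⟨Function.uncurry W, fun i => ?_, fun ⟨i, s⟩ ⟨j, t⟩ hij => ?_⟩
    · cases i using Fin.cases with
      | zero => simpa [W] using hab
      | succ i => simpa [W] using hw'1 i
    · cases i using Fin.cases <;> cases j using Fin.cases
      · exact absurd rfl hij
      · fin_cases s <;> simp [W, hM'a, hM'b]
      · fin_cases t <;> simp [W, hM'a, hM'b]
      · simpa [W] using hw'0 (_, s) (_, t) (by simpa using hij)

end Field

section OrderedField

variable {K M ι : Type*} [Field K] [LinearOrder K] [IsStrictOrderedRing K] [AddCommGroup M]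
  [Module K M] {B : M →ₗ[K] M →ₗ[K] K} [Fintype ι] [DecidableEq ι] {w : ι × Fin 2 → M}

theorem IsHyperbolicFamily.sign_mul_prod_nonneg (hB : B.IsAlt) (hw : IsHyperbolicFamily B w)
    (τ : Equiv.Perm (ι × Fin 2)) :
    0 ≤ (Equiv.Perm.sign τ : K) * ∏ i, B (w (τ (i, 0))) (w (τ (i, 1))) := by
  by_cases hblock : ∀ i, (τ (i, 0)).1 = (τ (i, 1)).1
  · obtain ⟨π, s, rfl⟩ := τ.exists_eq_prodCongr_mul_prodCongrRight fun i t t' => by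
      fin_cases t <;> fin_cases t' <;> simp [hblock i]
    have hsign : Equiv.Perm.sign (π.prodCongr (Equiv.refl _) * Equiv.prodCongrRight s) =
        ∏ i, Equiv.Perm.sign (s i) := by
      simp [Equiv.prodCongr_refl_right, Equiv.Perm.sign_prodCongrLeft,
        Equiv.Perm.sign_prodCongrRight]
    simp only [hsign, Equiv.Perm.mul_apply, Equiv.prodCongrRight_apply, Equiv.prodCongr_apply,
      Prod.map_apply, Equiv.coe_refl, id_eq, hw.apply_perm hB]
    push_cast
    rw [← Finset.prod_mul_distrib]
    exact Finset.prod_nonneg fun i _ => mul_self_nonneg _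
  · push Not at hblock
    obtain ⟨i, hi⟩ := hblock
    rw [Finset.prod_eq_zero (Finset.mem_univ i) (hw.2 _ _ hi), mul_zero]

theorem IsHyperbolicFamily.wedgePow_pos (hB : B.IsAlt) (hw : IsHyperbolicFamily B w) :
    0 < wedgePow B ι w := by
  rw [wedgePow_apply]
  exact Finset.sum_pos' (fun τ _ => hw.sign_mul_prod_nonneg hB τ) ⟨1, by simp [hw.1]⟩

end OrderedField

section Coisotropic

variable {K V W : Type*} [Field K] [AddCommGroup V] [Module K V] [FiniteDimensional K V]
  [AddCommGroup W] [Module K W]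

theorem finrank_ker_compl₂_subtype_add {ω : V →ₗ[K] V →ₗ[K] K} (hω : Function.Injective ω)
    (C : Submodule K V) : finrank K (ker (ω.compl₂ C.subtype)) + finrank K C = finrank K V := by
  have hω' : Function.Surjective ω :=
    (injective_iff_surjective_of_finrank_eq_finrank (Subspace.dual_finrank_eq).symm).mp hω
  have hsurj : Function.Surjective (ω.compl₂ C.subtype) :=
    (C.subtype.dualMap_surjective_of_injective C.injective_subtype).comp hω'
  have := (ω.compl₂ C.subtype).finrank_range_add_finrank_ker
  rw [range_eq_top.mpr hsurj, finrank_top, Subspace.dual_finrank_eq] at this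
  omega

theorem ker_le_iff_finrank_ker_le (Φ : V →ₗ[K] W) (C : Submodule K V) :
    ker Φ ≤ C ↔ finrank K (ker Φ) ≤ finrank K (ker (Φ ∘ₗ C.subtype)) := by
  rw [ker_comp, ← Submodule.finrank_map_subtype_eq, Submodule.map_comap_subtype, ← inf_eq_right]
  exact ⟨fun h => by rw [h], Submodule.eq_of_le_of_finrank_le inf_le_right⟩

end Coisotropic

end LinearMap

/-- Let `(V, ω)` be a symplectic vector space of dimension `2n`
(`ω` alternating and nondegenerate) and `C ⊆ V` a subspace of dimension `n + k`.
Then `C` is coisotropic (`C^ω ⊆ C`) iff the restriction to `C` of the `(k+1)`-fold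
wedge power `ω^{k+1}` vanishes; the wedge power is expressed (up to the nonzero
combinatorial factor `2^{k+1}(k+1)!`) by the alternating sum
`Σ_σ sign(σ) Π_i ω(v_{σ(2i)}, v_{σ(2i+1)})` over permutations of the `2k+2` arguments. -/
theorem stmt_11 (V : Type*) [AddCommGroup V] [Module ℝ V] [FiniteDimensional ℝ V]
    (n k : ℕ)
    (hdim : Module.finrank ℝ V = 2 * n)
    (ω : V →ₗ[ℝ] V →ₗ[ℝ] ℝ)
    (halt : ∀ v, ω v v = 0)
    (hnd : ∀ v, (∀ w, ω v w = 0) → v = 0)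
    (C : Submodule ℝ V) (hC : Module.finrank ℝ C = n + k) :
    (∀ v : V, (∀ c ∈ C, ω v c = 0) → v ∈ C) ↔
      (∀ v : Fin (2 * k + 2) → V, (∀ i, v i ∈ C) →
        ∑ σ : Equiv.Perm (Fin (2 * k + 2)),
          ((Equiv.Perm.sign σ : ℤ) : ℝ) *
            ∏ i : Fin (k + 1),
              ω (v (σ ⟨2 * i.1, by have := i.2; omega⟩))
                (v (σ ⟨2 * i.1 + 1, by have := i.2; omega⟩)) = 0) := by
  have hB : (ω.compl₁₂ C.subtype C.subtype).IsAlt := fun x => halt x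
  have hker := LinearMap.finrank_ker_compl₂_subtype_add ((injective_iff_map_eq_zero ω).mpr
    fun v hv => hnd v fun w => by rw [hv, LinearMap.zero_apply]) C
  have hcoiso : (∀ v, (∀ c ∈ C, ω v c = 0) → v ∈ C) ↔ LinearMap.ker (ω.compl₂ C.subtype) ≤ C := by
    simp [SetLike.le_def, LinearMap.ext_iff]
  rw [hcoiso, LinearMap.forall_sum_perm_fin_eq_zero_iff, LinearMap.ker_le_iff_finrank_ker_le]
  change _ ≤ finrank ℝ (LinearMap.ker (ω.compl₁₂ C.subtype C.subtype)) ↔ _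
  constructor
  · intro h
    refine LinearMap.wedgePow_eq_zero_of_finrank_lt hB ?_
    rw [Fintype.card_fin]
    omega
  · intro h
    by_contra hlt
    obtain ⟨w, hw⟩ := LinearMap.exists_isHyperbolicFamily hB (k + 1) (by omega)
    exact (hw.wedgePow_pos hB).ne' (by rw [h, AlternatingMap.zero_apply])
end

section
/- On the 4-torus T⁴ = ℝ⁴/ℤ⁴ with coordinates (y¹,y²,q¹,q²), there is no smooth leafwise 1-form Γ₂ = a(y,q)dq¹ + b(y,q)dq² along the foliation by the tori {y = const} such that the leafwise exterior derivative d_𝓕 Γ₂ equals 4π² cos(2πy¹)cos(2πy²) dq¹ ∧ dq², for any (y¹,y²) with cos(2πy¹)cos(2πy²) ≠ 0; equivalently, the 2-form cos(2πy¹)cos(2πy²) dq¹∧dq² is not leafwise exact because its integral over a generic leaf T²(y¹,y²) is nonzero. -/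
open Real MeasureTheory


section aux

variable (y₁ y₂ : ℝ)

private lemma curve_deriv2 (f : (Fin 4 → ℝ) → ℝ) (hf : ContDiff ℝ (⊤ : ℕ∞) f) (q₂ t : ℝ) :
    HasDerivAt (fun s => f ![y₁, y₂, s, q₂]) (fderiv ℝ f ![y₁, y₂, t, q₂] (Pi.single 2 1)) t := by
  have hγ : HasDerivAt (fun s => (![y₁, y₂, s, q₂] : Fin 4 → ℝ)) (Pi.single 2 1) t := by
    rw [hasDerivAt_pi]
    intro i
    fin_cases i <;> simp [Pi.single_apply] <;>
      first
        | exact hasDerivAt_const _ _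
        | exact hasDerivAt_id _
  exact ((hf.differentiable (by simp) _).hasFDerivAt).comp_hasDerivAt t hγ

private lemma curve_deriv3 (f : (Fin 4 → ℝ) → ℝ) (hf : ContDiff ℝ (⊤ : ℕ∞) f) (q₁ t : ℝ) :
    HasDerivAt (fun s => f ![y₁, y₂, q₁, s]) (fderiv ℝ f ![y₁, y₂, q₁, t] (Pi.single 3 1)) t := by
  have hγ : HasDerivAt (fun s => (![y₁, y₂, q₁, s] : Fin 4 → ℝ)) (Pi.single 3 1) t := by
    rw [hasDerivAt_pi]
    intro i
    fin_cases i <;> simp [Pi.single_apply] <;>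
      first
        | exact hasDerivAt_const _ _
        | exact hasDerivAt_id _
  exact ((hf.differentiable (by simp) _).hasFDerivAt).comp_hasDerivAt t hγ

private lemma per2 (f : (Fin 4 → ℝ) → ℝ)
    (hp : ∀ p : Fin 4 → ℝ, ∀ m : Fin 4 → ℤ, f (p + fun i => (m i : ℝ)) = f p) (q₂ : ℝ) :
    f ![y₁, y₂, 1, q₂] = f ![y₁, y₂, 0, q₂] := by
  have := hp ![y₁, y₂, 0, q₂] (Pi.single 2 1)
  convert this using 2
  funext i
  fin_cases i <;> simp [Pi.single_apply]

private lemma per3 (f : (Fin 4 → ℝ) → ℝ)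
    (hp : ∀ p : Fin 4 → ℝ, ∀ m : Fin 4 → ℤ, f (p + fun i => (m i : ℝ)) = f p) (q₁ : ℝ) :
    f ![y₁, y₂, q₁, 1] = f ![y₁, y₂, q₁, 0] := by
  have := hp ![y₁, y₂, q₁, 0] (Pi.single 3 1)
  convert this using 2
  funext i
  fin_cases i <;> simp [Pi.single_apply]

end aux

/-- On the 4-torus `T⁴ = ℝ⁴/ℤ⁴` (functions on `T⁴` = `ℤ⁴`-periodic smooth
functions on `ℝ⁴`, coordinates `(y¹,y²,q¹,q²) = (p 0, p 1, p 2, p 3)`), fix `(y¹,y²)`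
with `cos(2πy¹)cos(2πy²) ≠ 0`.  There is no smooth leafwise 1-form
`Γ₂ = a dq¹ + b dq²` along the foliation `{y = const}` whose leafwise differential
`d_𝓕 Γ₂ = (∂b/∂q¹ - ∂a/∂q²) dq¹∧dq²` equals
`4π² cos(2πy¹)cos(2πy²) dq¹∧dq²` on the leaf through `(y¹,y²)`. -/
theorem stmt_16 (y₁ y₂ : ℝ)
    (h : Real.cos (2 * π * y₁) * Real.cos (2 * π * y₂) ≠ 0) :
    ¬ ∃ a b : (Fin 4 → ℝ) → ℝ,
      ContDiff ℝ (⊤ : ℕ∞) a ∧ ContDiff ℝ (⊤ : ℕ∞) b ∧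
      (∀ p : Fin 4 → ℝ, ∀ m : Fin 4 → ℤ, a (p + fun i => (m i : ℝ)) = a p) ∧
      (∀ p : Fin 4 → ℝ, ∀ m : Fin 4 → ℤ, b (p + fun i => (m i : ℝ)) = b p) ∧
      (∀ q₁ q₂ : ℝ,
        fderiv ℝ b ![y₁, y₂, q₁, q₂] (Pi.single 2 1) -
          fderiv ℝ a ![y₁, y₂, q₁, q₂] (Pi.single 3 1) =
        4 * π ^ 2 * Real.cos (2 * π * y₁) * Real.cos (2 * π * y₂)) := by
  rintro ⟨a, b, ha, hb, hap, hbp, heq⟩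
  set c : ℝ := 4 * π ^ 2 * Real.cos (2 * π * y₁) * Real.cos (2 * π * y₂) with hcdef
  have hc : c ≠ 0 := by
    have h4 : (4 : ℝ) * π ^ 2 ≠ 0 := by positivity
    have : c = 4 * π ^ 2 * (Real.cos (2 * π * y₁) * Real.cos (2 * π * y₂)) := by
      rw [hcdef]; ring
    rw [this]
    exact mul_ne_zero h4 h
  set da : ℝ → ℝ → ℝ := fun q₁ q₂ => fderiv ℝ a ![y₁, y₂, q₁, q₂] (Pi.single 3 1) with hda
  set db : ℝ → ℝ → ℝ := fun q₁ q₂ => fderiv ℝ b ![y₁, y₂, q₁, q₂] (Pi.single 2 1) with hdb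
  have hcurve : Continuous fun p : ℝ × ℝ => (![y₁, y₂, p.1, p.2] : Fin 4 → ℝ) := by
    apply continuous_pi
    intro i
    fin_cases i <;> simp <;> continuity
  have hcda : Continuous fun p : ℝ × ℝ => da p.1 p.2 :=
    ((ha.continuous_fderiv (by simp)).comp hcurve).clm_apply continuous_const
  have hcdb : Continuous fun p : ℝ × ℝ => db p.1 p.2 :=
    ((hb.continuous_fderiv (by simp)).comp hcurve).clm_apply continuous_const
  -- FTC in q₁ for b : ∫ db = 0
  have hint_db : ∀ q₂ : ℝ, ∫ t in (0:ℝ)..1, db t q₂ = 0 := by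
    intro q₂
    have hcont : Continuous fun t => db t q₂ :=
      hcdb.comp (continuous_id.prodMk continuous_const)
    have := intervalIntegral.integral_eq_sub_of_hasDerivAt
      (fun t _ => curve_deriv2 y₁ y₂ b hb q₂ t) (hcont.intervalIntegrable 0 1)
    rw [this, per2 y₁ y₂ b hbp q₂, sub_self]
  -- hence ∫ da(·, q₂) = -c for every q₂
  have hint_da1 : ∀ q₂ : ℝ, ∫ t in (0:ℝ)..1, da t q₂ = -c := by
    intro q₂
    have hdaeq : ∀ t, da t q₂ = db t q₂ - c := fun t => by
      have := heq t q₂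
      simp only [hda, hdb]
      linarith [heq t q₂]
    simp only [hdaeq]
    have hcont : Continuous fun t => db t q₂ :=
      hcdb.comp (continuous_id.prodMk continuous_const)
    rw [intervalIntegral.integral_sub (hcont.intervalIntegrable 0 1)
      (intervalIntegrable_const), hint_db q₂, intervalIntegral.integral_const]
    simp
  -- FTC in q₂ for a : ∫ da(q₁, ·) = 0
  have hint_da2 : ∀ q₁ : ℝ, ∫ s in (0:ℝ)..1, da q₁ s = 0 := by
    intro q₁
    have hcont : Continuous fun s => da q₁ s :=
      hcda.comp (continuous_const.prodMk continuous_id)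
    have := intervalIntegral.integral_eq_sub_of_hasDerivAt
      (fun t _ => curve_deriv3 y₁ y₂ a ha q₁ t) (hcont.intervalIntegrable 0 1)
    rw [this, per3 y₁ y₂ a hap q₁, sub_self]
  -- Fubini
  set I : Set ℝ := Set.Ioc 0 1 with hI
  have hswap : ∫ q₁ in I, ∫ q₂ in I, da q₁ q₂ = ∫ q₂ in I, ∫ q₁ in I, da q₁ q₂ := by
    apply MeasureTheory.integral_integral_swap
    rw [Measure.prod_restrict]
    apply ((hcda.continuousOn).integrableOn_compact
      (isCompact_Icc.prod isCompact_Icc) (f := fun p : ℝ × ℝ => da p.1 p.2)).mono_set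
    exact Set.prod_mono Set.Ioc_subset_Icc_self Set.Ioc_subset_Icc_self
  have e1 : ∀ q₂ : ℝ, ∫ q₁ in I, da q₁ q₂ = -c := by
    intro q₂
    rw [← intervalIntegral.integral_of_le (zero_le_one)]
    exact hint_da1 q₂
  have e2 : ∀ q₁ : ℝ, ∫ q₂ in I, da q₁ q₂ = 0 := by
    intro q₁
    rw [← intervalIntegral.integral_of_le (zero_le_one)]
    exact hint_da2 q₁
  simp only [e2, integral_zero] at hswap
  simp only [e1] at hswap
  rw [setIntegral_const] at hswap
  simp [hI, Real.volume_Ioc] at hswap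
  exact hc hswap
end
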